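/- Let β > 0 and define y : (0,∞) → ℝ by y(x) := √x · K(1/(β+2), (2/(β+2))·x^((β+2)/2)), where K(ν,z) := ∫₀^∞ exp(−z·cosh t)·cosh(ν·t) dt. Then y(x) → 0 as x → ∞, and y is square-integrable on (0,∞), i.e. ∫₀^∞ y(x)² dx < ∞. -/

import Mathlib

open Set Filter

/-- Modified Bessel function of the second kind (integral representation):
`K(ν, z) = ∫₀^∞ exp(−z cosh t) cosh(ν t) dt`. -/
noncomputable def besselK (ν z : ℝ) : ℝ :=
  ∫ t in Set.Ioi (0 : ℝ), Real.exp (-z * Real.cosh t) * Real.cosh (ν * t)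

/-!
Two bounds on `K` do all the work. Bounding `cosh t ≥ eᵗ / 2` and substituting `u = eᵗ` turns the
integral into a Gamma integral, so `K(ν, z) ≤ (2 / z) ^ ν Γ(ν)`; for `z = c x ^ p` with `p ν = 1 / 2`
this makes `√x K(ν, z)` bounded. For `z ≥ 1`, `(z - 1)(cosh t - 1) ≥ 0` gives
`K(ν, z) ≤ e^(1 - z) K(ν, 1)`, and `c x ^ p ≥ x` for large `x` once `p > 1`, so `√x K(ν, z)` decays
like `e^(-x / 2)`. Boundedness together with this exponential decay gives both claims.
-/

open Real MeasureTheory Topology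

section ExpSubstitution

variable {μ c : ℝ}

lemma exp_mul_exp_rpow_sub_one (μ t : ℝ) : exp t * exp t ^ (μ - 1) = exp (μ * t) := by
  rw [rpow_def_of_pos (exp_pos t), log_exp, ← exp_add]
  ring_nf

lemma integrableOn_rpow_mul_exp_neg_mul (hμ : 0 < μ) (hc : 0 < c) :
    IntegrableOn (fun u : ℝ => u ^ (μ - 1) * exp (-(c * u))) (Ioi 0) :=
  .of_integral_ne_zero <| by
    rw [integral_rpow_mul_exp_neg_mul_Ioi hμ hc]
    exact (mul_pos (by positivity) (Gamma_pos_of_pos hμ)).ne'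

lemma setIntegral_exp_mul_exp_neg_mul_exp (μ c : ℝ) :
    ∫ t in Ioi (0 : ℝ), exp (μ * t) * exp (-(c * exp t))
      = ∫ u in Ioi (1 : ℝ), u ^ (μ - 1) * exp (-(c * u)) := by
  have h := integral_comp_exp_Ioi (fun u : ℝ => u ^ (μ - 1) * exp (-(c * u))) 0
  rw [exp_zero] at h
  rw [← h]
  refine setIntegral_congr_fun measurableSet_Ioi fun t _ => ?_
  rw [smul_eq_mul, ← mul_assoc, exp_mul_exp_rpow_sub_one]

lemma integrableOn_exp_mul_exp_neg_mul_exp (hμ : 0 < μ) (hc : 0 < c) :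
    IntegrableOn (fun t : ℝ => exp (μ * t) * exp (-(c * exp t))) (Ioi 0) := by
  have h := (integrableOn_comp_exp_Ioi (fun u : ℝ => u ^ (μ - 1) * exp (-(c * u))) 0).2 <| by
    rw [exp_zero]
    exact (integrableOn_rpow_mul_exp_neg_mul hμ hc).mono_set (Ioi_subset_Ioi zero_le_one)
  refine h.congr_fun (fun t _ => ?_) measurableSet_Ioi
  dsimp only
  rw [smul_eq_mul, ← mul_assoc, exp_mul_exp_rpow_sub_one]

lemma setIntegral_exp_mul_exp_neg_mul_exp_le (hμ : 0 < μ) (hc : 0 < c) :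
    ∫ t in Ioi (0 : ℝ), exp (μ * t) * exp (-(c * exp t)) ≤ (1 / c) ^ μ * Gamma μ := by
  rw [setIntegral_exp_mul_exp_neg_mul_exp, ← integral_rpow_mul_exp_neg_mul_Ioi hμ hc]
  refine setIntegral_mono_set (integrableOn_rpow_mul_exp_neg_mul hμ hc) ?_
    (Ioi_subset_Ioi zero_le_one).eventuallyLE
  filter_upwards [ae_restrict_mem measurableSet_Ioi] with u (hu : 0 < u)
  positivity

end ExpSubstitution

section BesselK

variable {ν μ z : ℝ}

lemma besselK_integrand_le (hz : 0 ≤ z) (hνμ : |ν| ≤ μ) {t : ℝ} (ht : 0 ≤ t) :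
    exp (-z * cosh t) * cosh (ν * t) ≤ exp (μ * t) * exp (-(z / 2 * exp t)) := by
  have hcosh : exp t / 2 ≤ cosh t := by
    rw [cosh_eq]
    linarith [exp_pos (-t)]
  have hdecay : exp (-z * cosh t) ≤ exp (-(z / 2 * exp t)) :=
    exp_le_exp.2 (by nlinarith)
  have hgrowth : cosh (ν * t) ≤ exp (μ * t) := by
    rw [← cosh_abs, abs_mul, abs_of_nonneg ht, cosh_eq]
    have : exp (-(|ν| * t)) ≤ exp (|ν| * t) := exp_le_exp.2 (by nlinarith [abs_nonneg ν])
    have : exp (|ν| * t) ≤ exp (μ * t) := exp_le_exp.2 (by nlinarith)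
    linarith
  rw [mul_comm (exp (μ * t))]
  exact mul_le_mul hdecay hgrowth (cosh_pos _).le (exp_pos _).le

lemma integrableOn_besselK_integrand (ν : ℝ) (hz : 0 < z) :
    IntegrableOn (fun t : ℝ => exp (-z * cosh t) * cosh (ν * t)) (Ioi 0) := by
  refine (integrableOn_exp_mul_exp_neg_mul_exp (μ := |ν| + 1) (by positivity)
    (half_pos hz)).mono' (by fun_prop) ?_
  filter_upwards [ae_restrict_mem measurableSet_Ioi] with t (ht : 0 < t)
  rw [norm_of_nonneg (by positivity)]
  exact besselK_integrand_le hz.le (le_add_of_nonneg_right zero_le_one) ht.le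

lemma besselK_nonneg (ν z : ℝ) : 0 ≤ besselK ν z :=
  setIntegral_nonneg measurableSet_Ioi fun _ _ => by positivity

lemma besselK_le_rpow_mul_Gamma (hν : 0 < ν) (hz : 0 < z) :
    besselK ν z ≤ (2 / z) ^ ν * Gamma ν := by
  rw [← one_div_div]
  refine le_trans ?_ (setIntegral_exp_mul_exp_neg_mul_exp_le hν (half_pos hz))
  exact setIntegral_mono_on (integrableOn_besselK_integrand ν hz)
    (integrableOn_exp_mul_exp_neg_mul_exp hν (half_pos hz)) measurableSet_Ioi
    fun t ht => besselK_integrand_le hz.le (abs_of_pos hν).le (le_of_lt ht)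

lemma besselK_le_exp_one_sub_mul (ν : ℝ) (hz : 1 ≤ z) :
    besselK ν z ≤ exp (1 - z) * besselK ν 1 := by
  rw [besselK, besselK, ← integral_const_mul]
  refine setIntegral_mono_on (integrableOn_besselK_integrand ν (by linarith))
    ((integrableOn_besselK_integrand ν one_pos).const_mul _) measurableSet_Ioi fun t _ => ?_
  have hexp : exp (-z * cosh t) ≤ exp (1 - z) * exp (-1 * cosh t) := by
    rw [← exp_add]
    exact exp_le_exp.2 (by nlinarith [one_le_cosh t])
  rw [← mul_assoc]
  exact mul_le_mul_of_nonneg_right hexp (cosh_pos _).le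

lemma measurable_besselK (ν : ℝ) : Measurable (besselK ν) := by
  have h : StronglyMeasurable fun q : ℝ × ℝ => exp (-q.1 * cosh q.2) * cosh (ν * q.2) :=
    (by fun_prop : Measurable _).stronglyMeasurable
  exact (h.integral_prod_right' (ν := volume.restrict (Ioi 0))).measurable

end BesselK

section BesselSolution

variable {ν c p : ℝ}

lemma eventually_le_mul_rpow (hc : 0 < c) (hp : 1 < p) : ∀ᶠ x in atTop, x ≤ c * x ^ p := by
  filter_upwards [((tendsto_rpow_atTop (sub_pos.2 hp)).const_mul_atTop hc).eventually_ge_atTop 1,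
    eventually_gt_atTop 0] with x hx hx0
  calc x ≤ x * (c * x ^ (p - 1)) := le_mul_of_one_le_right hx0.le hx
    _ = c * x ^ p := by rw [rpow_sub_one hx0.ne']; field_simp

lemma sqrt_mul_besselK_le (hν : 0 < ν) (hc : 0 < c) (hpν : p * ν = 1 / 2) {x : ℝ} (hx : 0 < x) :
    √x * besselK ν (c * x ^ p) ≤ (2 / c) ^ ν * Gamma ν := by
  have hxp : 0 < x ^ p := rpow_pos_of_pos hx p
  have hpow : (x ^ p) ^ ν = √x := by rw [← rpow_mul hx.le, hpν, sqrt_eq_rpow]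
  calc √x * besselK ν (c * x ^ p) ≤ √x * ((2 / (c * x ^ p)) ^ ν * Gamma ν) :=
        mul_le_mul_of_nonneg_left (besselK_le_rpow_mul_Gamma hν (by positivity)) (sqrt_nonneg x)
    _ = (2 / c) ^ ν * Gamma ν := by
        rw [← div_div, div_rpow (by positivity) hxp.le, hpow]
        field_simp [(sqrt_pos.2 hx).ne']

lemma eventually_sqrt_mul_besselK_le (ν : ℝ) (hc : 0 < c) (hp : 1 < p) :
    ∀ᶠ x in atTop, √x * besselK ν (c * x ^ p) ≤ exp 1 * besselK ν 1 * exp (-(x / 2)) := by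
  filter_upwards [eventually_le_mul_rpow hc hp, eventually_ge_atTop 1] with x hxz hx1
  have hK : besselK ν (c * x ^ p) ≤ exp (1 - x) * besselK ν 1 :=
    (besselK_le_exp_one_sub_mul ν (hx1.trans hxz)).trans <|
      mul_le_mul_of_nonneg_right (exp_le_exp.2 (by linarith)) (besselK_nonneg ν 1)
  have hsqrt : √x ≤ exp (x / 2) := by
    rw [exp_half]
    exact sqrt_le_sqrt (by linarith [add_one_le_exp x])
  calc √x * besselK ν (c * x ^ p) ≤ exp (x / 2) * (exp (1 - x) * besselK ν 1) :=
        mul_le_mul hsqrt hK (besselK_nonneg ν _) (exp_pos _).le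
    _ = exp 1 * besselK ν 1 * exp (-(x / 2)) := by
        have hexp : exp (x / 2) * exp (1 - x) = exp 1 * exp (-(x / 2)) := by
          rw [← exp_add, ← exp_add]
          ring_nf
        linear_combination besselK ν 1 * hexp

lemma tendsto_sqrt_mul_besselK_atTop (ν : ℝ) (hc : 0 < c) (hp : 1 < p) :
    Tendsto (fun x : ℝ => √x * besselK ν (c * x ^ p)) atTop (𝓝 0) := by
  have hdecay : Tendsto (fun x : ℝ => exp 1 * besselK ν 1 * exp (-(x / 2))) atTop (𝓝 0) := by
    simpa using (tendsto_exp_neg_atTop_nhds_zero.comp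
      (tendsto_id.atTop_div_const two_pos)).const_mul (exp 1 * besselK ν 1)
  exact tendsto_of_tendsto_of_tendsto_of_le_of_le' tendsto_const_nhds hdecay
    (.of_forall fun x => mul_nonneg (sqrt_nonneg x) (besselK_nonneg ν _))
    (eventually_sqrt_mul_besselK_le ν hc hp)

lemma integrableOn_sq_sqrt_mul_besselK (hν : 0 < ν) (hc : 0 < c) (hp : 1 < p)
    (hpν : p * ν = 1 / 2) :
    IntegrableOn (fun x : ℝ => (√x * besselK ν (c * x ^ p)) ^ 2) (Ioi 0) := by
  obtain ⟨a, ha⟩ := eventually_atTop.1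
    ((eventually_sqrt_mul_besselK_le ν hc hp).and (eventually_ge_atTop 0))
  have hmeas : AEStronglyMeasurable (fun x : ℝ => (√x * besselK ν (c * x ^ p)) ^ 2) volume := by
    have := measurable_besselK ν
    fun_prop
  have hy0 : ∀ x, 0 ≤ √x * besselK ν (c * x ^ p) :=
    fun x => mul_nonneg (sqrt_nonneg x) (besselK_nonneg ν _)
  rw [← Ioc_union_Ioi_eq_Ioi (ha a le_rfl).2]
  refine IntegrableOn.union ?_ ?_
  · refine Measure.integrableOn_of_bounded measure_Ioc_lt_top.ne hmeas
      (M := ((2 / c) ^ ν * Gamma ν) ^ 2) ?_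
    filter_upwards [ae_restrict_mem measurableSet_Ioc] with x hx
    rw [norm_of_nonneg (sq_nonneg _)]
    exact pow_le_pow_left₀ (hy0 x) (sqrt_mul_besselK_le hν hc hpν hx.1) 2
  · refine ((exp_neg_integrableOn_Ioi a one_pos).const_mul ((exp 1 * besselK ν 1) ^ 2)).mono'
      hmeas.restrict ?_
    filter_upwards [ae_restrict_mem measurableSet_Ioi] with x (hx : a < x)
    rw [norm_of_nonneg (sq_nonneg _)]
    calc (√x * besselK ν (c * x ^ p)) ^ 2 ≤ (exp 1 * besselK ν 1 * exp (-(x / 2))) ^ 2 :=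
          pow_le_pow_left₀ (hy0 x) (ha x hx.le).1 2
      _ = (exp 1 * besselK ν 1) ^ 2 * exp (-1 * x) := by
          rw [mul_pow, ← exp_nat_mul]
          ring_nf

end BesselSolution

theorem stmt6 (β : ℝ) (hβ : 0 < β) :
    Tendsto (fun x : ℝ =>
        Real.sqrt x * besselK (1 / (β + 2)) (2 / (β + 2) * x ^ ((β + 2) / 2)))
      atTop (nhds 0) ∧
    MeasureTheory.IntegrableOn
      (fun x : ℝ =>
        (Real.sqrt x * besselK (1 / (β + 2)) (2 / (β + 2) * x ^ ((β + 2) / 2))) ^ 2)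
      (Ioi (0 : ℝ)) := by
  have hc : 0 < 2 / (β + 2) := by positivity
  have hp : 1 < (β + 2) / 2 := by linarith
  have hpν : (β + 2) / 2 * (1 / (β + 2)) = 1 / 2 := by field_simp
  exact ⟨tendsto_sqrt_mul_besselK_atTop _ hc hp,
    integrableOn_sq_sqrt_mul_besselK (by positivity) hc hp hpν⟩
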